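/- arXiv:2207.08211 — 8 statements merged into one kernel-verified Lean document; each statement's English description precedes it below -/
import Mathlib

section
/- Suppose φ : Ω → M and Y : Ω → K are square-integrable random elements with means μ_X = E[φ], μ_Y = E[Y] and covariance operators Σ_XX, Σ_XY, and suppose B₀ : K → M is a bounded linear operator satisfying Σ_XX B₀ = Σ_XY. Then B₀ solves the function-on-function least-squares problem: for every g ∈ K and every bounded linear operator B : K → M, E[(⟨g, Y − μ_Y⟩ − ⟨B₀ g, φ − μ_X⟩)²] ≤ E[(⟨g, Y − μ_Y⟩ − ⟨B g, φ − μ_X⟩)²]. -/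
open MeasureTheory RealInnerProductSpace

private lemma integrable_mul_of_memL2 {Ω : Type*} [MeasurableSpace Ω] {P : Measure Ω}
    {f g : Ω → ℝ} (hf : MemLp f 2 P) (hg : MemLp g 2 P) :
    Integrable (fun ω => f ω * g ω) P := by
  have h : Integrable (fun ω => ((f ω + g ω) ^ 2 - f ω ^ 2 - g ω ^ 2) / 2) P :=
    (((hf.add hg).integrable_sq.sub hf.integrable_sq).sub hg.integrable_sq).div_const 2
  convert h using 2 with ω
  ring

/-- The regression operator `B₀` with `Σ_XX B₀ = Σ_XY` solves the
function-on-function least-squares problem. -/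
theorem stmt0
    {Ω : Type*} [MeasurableSpace Ω] (P : Measure Ω) [IsProbabilityMeasure P]
    {M K : Type*}
    [NormedAddCommGroup M] [InnerProductSpace ℝ M] [CompleteSpace M]
    [NormedAddCommGroup K] [InnerProductSpace ℝ K] [CompleteSpace K]
    (φ : Ω → M) (Y : Ω → K)
    (hφ : MemLp φ 2 P) (hY : MemLp Y 2 P)
    (μX : M) (μY : K)
    (hμX : μX = ∫ ω, φ ω ∂P) (hμY : μY = ∫ ω, Y ω ∂P)
    (CXX : M →L[ℝ] M) (CXY : K →L[ℝ] M)
    (hCXX : ∀ f h : M, ⟪f, CXX h⟫ = ∫ ω, ⟪f, φ ω - μX⟫ * ⟪h, φ ω - μX⟫ ∂P)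
    (hCXY : ∀ (f : M) (g : K), ⟪f, CXY g⟫ = ∫ ω, ⟪f, φ ω - μX⟫ * ⟪g, Y ω - μY⟫ ∂P)
    (B₀ : K →L[ℝ] M) (hB₀ : CXX.comp B₀ = CXY) :
    ∀ (g : K) (B : K →L[ℝ] M),
      ∫ ω, (⟪g, Y ω - μY⟫ - ⟪B₀ g, φ ω - μX⟫) ^ 2 ∂P
        ≤ ∫ ω, (⟪g, Y ω - μY⟫ - ⟪B g, φ ω - μX⟫) ^ 2 ∂P := by
  intro g B
  have hX2 : MemLp (fun ω => φ ω - μX) 2 P := hφ.sub (memLp_const μX)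
  have hY2 : MemLp (fun ω => Y ω - μY) 2 P := hY.sub (memLp_const μY)
  set fY : Ω → ℝ := fun ω => ⟪g, Y ω - μY⟫ with hfYdef
  set f0 : Ω → ℝ := fun ω => ⟪B₀ g, φ ω - μX⟫ with hf0def
  set fB : Ω → ℝ := fun ω => ⟪B g, φ ω - μX⟫ with hfBdef
  have hfY : MemLp fY 2 P := hY2.const_inner g
  have hf0 : MemLp f0 2 P := hX2.const_inner (B₀ g)
  have hfB : MemLp fB 2 P := hX2.const_inner (B g)
  -- the direction h
  set h : M := B₀ g - B g with hhdef
  have hdiff : ∀ ω, f0 ω - fB ω = ⟪h, φ ω - μX⟫ := by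
    intro ω
    simp [hf0def, hfBdef, hhdef, inner_sub_left]
  have hfh : MemLp (fun ω => ⟪h, φ ω - μX⟫) 2 P := hX2.const_inner h
  -- cross term is zero
  have hCXXB : CXX (B₀ g) = CXY g := by
    have := congrArg (fun T : K →L[ℝ] M => T g) hB₀
    simpa using this
  have cross : ∫ ω, (f0 ω - fB ω) * (fY ω - f0 ω) ∂P = 0 := by
    have h1 : ∫ ω, ⟪h, φ ω - μX⟫ * fY ω ∂P = ⟪h, CXY g⟫ := (hCXY h g).symm
    have h2 : ∫ ω, ⟪h, φ ω - μX⟫ * f0 ω ∂P = ⟪h, CXX (B₀ g)⟫ := (hCXX h (B₀ g)).symm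
    have hi1 : Integrable (fun ω => ⟪h, φ ω - μX⟫ * fY ω) P :=
      integrable_mul_of_memL2 hfh hfY
    have hi2 : Integrable (fun ω => ⟪h, φ ω - μX⟫ * f0 ω) P :=
      integrable_mul_of_memL2 hfh hf0
    have : ∫ ω, (f0 ω - fB ω) * (fY ω - f0 ω) ∂P
        = ∫ ω, (⟪h, φ ω - μX⟫ * fY ω - ⟪h, φ ω - μX⟫ * f0 ω) ∂P := by
      congr 1 with ω
      rw [hdiff ω]; ring
    rw [this, integral_sub hi1 hi2, h1, h2, hCXXB, sub_self]
  -- decomposition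
  have hI1 : Integrable (fun ω => (fY ω - f0 ω) ^ 2) P := (hfY.sub hf0).integrable_sq
  have hI2 : Integrable (fun ω => (f0 ω - fB ω) ^ 2) P := (hf0.sub hfB).integrable_sq
  have hI3 : Integrable (fun ω => (f0 ω - fB ω) * (fY ω - f0 ω)) P :=
    integrable_mul_of_memL2 (hf0.sub hfB) (hfY.sub hf0)
  have hdecomp : ∫ ω, (fY ω - fB ω) ^ 2 ∂P
      = (∫ ω, (fY ω - f0 ω) ^ 2 ∂P) + (∫ ω, (f0 ω - fB ω) ^ 2 ∂P)
        + 2 * ∫ ω, (f0 ω - fB ω) * (fY ω - f0 ω) ∂P := by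
    have : ∫ ω, (fY ω - fB ω) ^ 2 ∂P
        = ∫ ω, ((fY ω - f0 ω) ^ 2 + (f0 ω - fB ω) ^ 2
            + 2 * ((f0 ω - fB ω) * (fY ω - f0 ω))) ∂P := by
      congr 1 with ω; ring
    have hI12 : Integrable (fun ω => (fY ω - f0 ω) ^ 2 + (f0 ω - fB ω) ^ 2) P := hI1.add hI2
    have hI3' : Integrable (fun ω => 2 * ((f0 ω - fB ω) * (fY ω - f0 ω))) P := hI3.const_mul 2
    rw [this, integral_add hI12 hI3', integral_add hI1 hI2, integral_const_mul]
  rw [hdecomp, cross]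
  have : 0 ≤ ∫ ω, (f0 ω - fB ω) ^ 2 ∂P := integral_nonneg fun ω => sq_nonneg _
  linarith
end

section
/- Let (Ω, 𝓕, P) be a probability space, m a sub-σ-algebra of 𝓕, and Z : Ω → ℝ a square-integrable random variable. Let D be a set of m-measurable square-integrable real-valued functions on Ω such that the closure in L²(Ω, m, P) of the linear span of D together with the constant functions equals L²(Ω, m, P). If Cov(Z, h) := E[Z h] − E[Z]E[h] = 0 for every h ∈ D, then the conditional expectation E[Z | m] equals the constant E[Z] almost surely. -/
open MeasureTheory

theorem stmt1_aux
    {Ω : Type*} (m : MeasurableSpace Ω) [F : MeasurableSpace Ω]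
    (P : Measure Ω) [IsProbabilityMeasure P] (hm : m ≤ F)
    (Z : Ω → ℝ) (hZ : MemLp Z 2 P)
    (D : Set (Ω → ℝ))
    (hDL2 : ∀ h ∈ D, MemLp h 2 P)
    (hdense :
      closure (↑(Submodule.span ℝ
          ({f : Lp ℝ 2 P | ∃ h ∈ D, (f : Ω → ℝ) =ᵐ[P] h} ∪
            {f : Lp ℝ 2 P | (f : Ω → ℝ) =ᵐ[P] fun _ => (1 : ℝ)})) : Set (Lp ℝ 2 P))
        = (@lpMeas Ω ℝ ℝ _ _ _ m F 2 P : Set (Lp ℝ 2 P)))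
    (hcov : ∀ h ∈ D,
      (∫ ω, Z ω * h ω ∂P) - (∫ ω, Z ω ∂P) * (∫ ω, h ω ∂P) = 0) :
    P[Z|m] =ᵐ[P] fun _ => ∫ ω, Z ω ∂P := by
  haveI : Fact (m ≤ F) := ⟨hm⟩
  set c : ℝ := ∫ ω, Z ω ∂P with hc
  set f : Lp ℝ 2 P := hZ.toLp Z with hf
  set oneL : Lp ℝ 2 P := (memLp_const (1 : ℝ)).toLp (fun _ => (1 : ℝ)) with honeL
  have hone_ae : (oneL : Ω → ℝ) =ᵐ[P] fun _ => (1 : ℝ) := (memLp_const (1 : ℝ)).coeFn_toLp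
  have hf_ae : (f : Ω → ℝ) =ᵐ[P] Z := hZ.coeFn_toLp
  set S : Set (Lp ℝ 2 P) :=
    ({g : Lp ℝ 2 P | ∃ h ∈ D, (g : Ω → ℝ) =ᵐ[P] h} ∪
      {g : Lp ℝ 2 P | (g : Ω → ℝ) =ᵐ[P] fun _ => (1 : ℝ)}) with hS
  set u : Lp ℝ 2 P := f - c • oneL with hu
  -- inner products as integrals
  have hinner : ∀ (a b : Lp ℝ 2 P), (inner ℝ a b : ℝ) = ∫ ω, a ω * b ω ∂P := by
    intro a b
    rw [MeasureTheory.L2.inner_def]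
    simp [RCLike.inner_apply]
    exact integral_congr_ae (Filter.Eventually.of_forall fun ω => mul_comm _ _)
  have hfe : ∀ (g : Lp ℝ 2 P) (h : Ω → ℝ), (g : Ω → ℝ) =ᵐ[P] h →
      (inner ℝ f g : ℝ) = ∫ ω, Z ω * h ω ∂P := by
    intro g h hg
    rw [hinner]
    exact integral_congr_ae ((hf_ae.mul hg).mono fun ω hω => hω)
  have honee : ∀ (g : Lp ℝ 2 P) (h : Ω → ℝ), (g : Ω → ℝ) =ᵐ[P] h →
      (inner ℝ oneL g : ℝ) = ∫ ω, h ω ∂P := by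
    intro g h hg
    rw [hinner]
    refine integral_congr_ae ((hone_ae.mul hg).mono fun ω hω => ?_)
    simpa using hω
  -- u is orthogonal to every element of S
  have hortho : ∀ g ∈ S, (inner ℝ u g : ℝ) = 0 := by
    intro g hg
    rw [hu, inner_sub_left, inner_smul_left]
    rcases hg with hg | hg
    · obtain ⟨h, hhD, hgh⟩ := hg
      rw [hfe g h hgh, honee g h hgh]
      simpa using hcov h hhD
    · rw [hfe g _ hg, honee g _ hg]
      simp [← hc, measure_univ]
  -- hence orthogonal to the closure of the span, i.e. to lpMeas
  have hortho' : ∀ g ∈ lpMeas ℝ ℝ m 2 P, (inner ℝ u g : ℝ) = 0 := by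
    intro g hg
    have hsub : (Submodule.span ℝ S : Set (Lp ℝ 2 P)) ⊆
        ((LinearMap.ker (innerSL ℝ u : Lp ℝ 2 P →ₗ[ℝ] ℝ) : Submodule ℝ (Lp ℝ 2 P)) : Set (Lp ℝ 2 P)) := by
      intro x hx
      exact Submodule.span_le.mpr (fun y hy => by
        simpa [LinearMap.mem_ker] using hortho y hy) hx
    have hclosed : IsClosed ((LinearMap.ker (innerSL ℝ u : Lp ℝ 2 P →ₗ[ℝ] ℝ) : Submodule ℝ (Lp ℝ 2 P)) :
        Set (Lp ℝ 2 P)) := ContinuousLinearMap.isClosed_ker (innerSL ℝ u)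
    have hcl := closure_minimal hsub hclosed
    rw [hdense] at hcl
    simpa [LinearMap.mem_ker] using hcl hg
  have hu_mem : u ∈ (lpMeas ℝ ℝ m 2 P)ᗮ := (Submodule.mem_orthogonal' _ u).mpr hortho'
  -- condExpL2 of u is zero
  have hcu : condExpL2 ℝ ℝ hm u = 0 :=
    Submodule.orthogonalProjectionOnto_apply_of_mem_orthogonal hu_mem
  -- oneL is in lpMeas
  have hone_mem : oneL ∈ lpMeas ℝ ℝ m 2 P := by
    rw [mem_lpMeas_iff_aestronglyMeasurable]
    exact AEStronglyMeasurable.congr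
      ((stronglyMeasurable_const :
        StronglyMeasurable[m] fun _ : Ω => (1 : ℝ)).aestronglyMeasurable)
      hone_ae.symm
  have hcone : condExpL2 ℝ ℝ hm oneL = ⟨oneL, hone_mem⟩ :=
    Submodule.orthogonalProjectionOnto_mem_subspace_eq_self ⟨oneL, hone_mem⟩
  -- condExpL2 f = c • oneL
  have hcf : (condExpL2 ℝ ℝ hm f : Lp ℝ 2 P) = c • oneL := by
    have hsplit : f = u + c • oneL := by rw [hu]; abel
    rw [hsplit, map_add, _root_.map_smul, hcu, hcone]
    simp
  have hcf_ae : (condExpL2 ℝ ℝ hm f : Ω → ℝ) =ᵐ[P] fun _ => c := by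
    rw [hcf]
    filter_upwards [Lp.coeFn_smul c oneL, hone_ae] with ω h1 h2
    simp [h1, h2]
  -- conclude by uniqueness of conditional expectation
  haveI : SigmaFinite (P.trim hm) := inferInstance
  have hZint : Integrable Z P := hZ.integrable one_le_two
  refine (ae_eq_condExp_of_forall_setIntegral_eq hm hZint
    (fun s _ _ => integrableOn_const (measure_lt_top _ _).ne)
    (fun s hs hμs => ?_)
    (StronglyMeasurable.aestronglyMeasurable
      (stronglyMeasurable_const : StronglyMeasurable[m] fun _ : Ω => c))).symm
  have h1 : ∫ ω in s, Z ω ∂P = ∫ ω in s, (f : Ω → ℝ) ω ∂P :=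
    setIntegral_congr_ae (hm s hs) (hf_ae.mono fun ω hω _ => hω.symm)
  have h2 := integral_condExpL2_eq (E' := ℝ) (𝕜 := ℝ) hm f hs hμs.ne
  have h3 : ∫ ω in s, (condExpL2 ℝ ℝ hm f : Ω → ℝ) ω ∂P = ∫ ω in s, c ∂P :=
    setIntegral_congr_ae (hm s hs) (hcf_ae.mono fun ω hω _ => hω)
  rw [h1, ← h2, h3]

/-- A square-integrable real random variable `Z` that is uncorrelated with every
member of a set `D` of `m`-measurable square-integrable functions, where the span
of `D` together with the constants is dense in `L²(Ω, m, P)`, has almost surely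
constant conditional expectation `E[Z | m] = E[Z]`. -/
theorem stmt1
    {Ω : Type*} [F : MeasurableSpace Ω] (P : Measure Ω) [IsProbabilityMeasure P]
    (m : MeasurableSpace Ω) (hm : m ≤ F)
    (Z : Ω → ℝ) (hZ : MemLp Z 2 P)
    (D : Set (Ω → ℝ))
    (hDmeas : ∀ h ∈ D, StronglyMeasurable[m] h)
    (hDL2 : ∀ h ∈ D, MemLp h 2 P)
    (hdense :
      closure (↑(Submodule.span ℝ
          ({f : Lp ℝ 2 P | ∃ h ∈ D, (f : Ω → ℝ) =ᵐ[P] h} ∪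
            {f : Lp ℝ 2 P | (f : Ω → ℝ) =ᵐ[P] fun _ => (1 : ℝ)})) : Set (Lp ℝ 2 P))
        = (@lpMeas Ω ℝ ℝ _ _ _ m F 2 P : Set (Lp ℝ 2 P)))
    (hcov : ∀ h ∈ D,
      (∫ ω, Z ω * h ω ∂P) - (∫ ω, Z ω ∂P) * (∫ ω, h ω ∂P) = 0) :
    P[Z|m] =ᵐ[P] fun _ => ∫ ω, Z ω ∂P :=
  @stmt1_aux Ω m F P inferInstance hm Z hZ D hDL2 hdense hcov
end

section
/- Let m be a sub-σ-algebra of 𝓕, let φ : Ω → M be m-measurable and square-integrable, and let Y : Ω → K be square-integrable, with means μ_X = E[φ], μ_Y = E[Y] and covariance operators Σ_XX, Σ_XY. Assume: (i) B₀ : K → M is a bounded linear operator with Σ_XX B₀ = Σ_XY; (ii) the set of random variables {ω ↦ ⟨h, φ(ω)⟩ : h ∈ M}, together with the constant functions, spans a dense subspace of L²(Ω, m, P). Then for every g ∈ K, E[⟨g, Y⟩ | m] = ⟨B₀ g, φ − μ_X⟩ + E[⟨g, Y⟩] almost surely. -/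
open MeasureTheory RealInnerProductSpace

private lemma memL1_mul {Ω : Type*} {mΩ : MeasurableSpace Ω} {P : Measure Ω}
    {f g : Ω → ℝ} (hf : MemLp f 2 P) (hg : MemLp g 2 P) :
    Integrable (fun ω => f ω * g ω) P :=
  memLp_one_iff_integrable.mp <| by
    exact hg.smul hf (r := 1)

/-- Proposition 1 of the paper (abstract form): if `Σ_XX B₀ = Σ_XY` and the linear
functionals of the feature map `φ` together with the constants span a dense subspace
of `L²(Ω, m, P)`, then `E[⟨g, Y⟩ | m] = ⟨B₀ g, φ − μ_X⟩ + E[⟨g, Y⟩]` a.s. -/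
theorem stmt2
    {Ω : Type*} [F : MeasurableSpace Ω] (P : Measure Ω) [IsProbabilityMeasure P]
    {M K : Type*}
    [NormedAddCommGroup M] [InnerProductSpace ℝ M] [CompleteSpace M]
    [NormedAddCommGroup K] [InnerProductSpace ℝ K] [CompleteSpace K]
    (m : MeasurableSpace Ω) (hm : m ≤ F)
    (φ : Ω → M) (Y : Ω → K)
    (hφm : StronglyMeasurable[m] φ)
    (hφ : MemLp φ 2 P) (hY : MemLp Y 2 P)
    (μX : M) (μY : K)
    (hμX : μX = ∫ ω, φ ω ∂P) (hμY : μY = ∫ ω, Y ω ∂P)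
    (CXX : M →L[ℝ] M) (CXY : K →L[ℝ] M)
    (hCXX : ∀ f h : M, ⟪f, CXX h⟫ = ∫ ω, ⟪f, φ ω - μX⟫ * ⟪h, φ ω - μX⟫ ∂P)
    (hCXY : ∀ (f : M) (g : K), ⟪f, CXY g⟫ = ∫ ω, ⟪f, φ ω - μX⟫ * ⟪g, Y ω - μY⟫ ∂P)
    (B₀ : K →L[ℝ] M) (hB₀ : CXX.comp B₀ = CXY)
    (hdense :
      closure (↑(Submodule.span ℝ
          ({f : Lp ℝ 2 P | ∃ h : M, (f : Ω → ℝ) =ᵐ[P] fun ω => ⟪h, φ ω⟫} ∪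
            {f : Lp ℝ 2 P | (f : Ω → ℝ) =ᵐ[P] fun _ => (1 : ℝ)})) : Set (Lp ℝ 2 P))
        = (@lpMeas Ω ℝ ℝ _ _ _ m F 2 P : Set (Lp ℝ 2 P))) :
    ∀ g : K,
      P[fun ω => ⟪g, Y ω⟫|m]
        =ᵐ[P] fun ω => ⟪B₀ g, φ ω - μX⟫ + ∫ ω', ⟪g, Y ω'⟫ ∂P := by
  intro g
  letI : MeasurableSpace Ω := F
  have hφi : Integrable φ P := hφ.integrable one_le_two
  have hYi : Integrable Y P := hY.integrable one_le_two
  have hφc : MemLp (fun ω => φ ω - μX) 2 P := hφ.sub (memLp_const μX)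
  have hYc : MemLp (fun ω => Y ω - μY) 2 P := hY.sub (memLp_const μY)
  have hφci : Integrable (fun ω => φ ω - μX) P := hφi.sub (integrable_const μX)
  have hYci : Integrable (fun ω => Y ω - μY) P := hYi.sub (integrable_const μY)
  have hφc0 : (∫ ω, (φ ω - μX) ∂P) = 0 := by
    rw [integral_sub hφi (integrable_const μX)]
    simp [← hμX]
  have hYc0 : (∫ ω, (Y ω - μY) ∂P) = 0 := by
    rw [integral_sub hYi (integrable_const μY)]
    simp [← hμY]
  set c : ℝ := ∫ ω', ⟪g, Y ω'⟫ ∂P with hcdef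
  have hc : c = ⟪g, μY⟫ := by rw [hcdef, integral_inner hYi, ← hμY]
  set W : Ω → ℝ := fun ω => ⟪g, Y ω - μY⟫ - ⟪B₀ g, φ ω - μX⟫ with hWdef
  have hW2 : MemLp W 2 P := (hYc.const_inner g).sub (hφc.const_inner (B₀ g))
  have hWi : Integrable W P := hW2.integrable one_le_two
  -- mean zero
  have hintW : (∫ ω, W ω ∂P) = 0 := by
    simp only [hWdef]
    rw [integral_sub ((hYc.const_inner g).integrable one_le_two)
        ((hφc.const_inner (B₀ g)).integrable one_le_two),
      integral_inner hYci, integral_inner hφci, hYc0, hφc0]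
    simp
  -- orthogonality to the feature functionals
  have key : ∀ h : M, (∫ ω, ⟪h, φ ω⟫ * W ω ∂P) = 0 := by
    intro h
    have hA : MemLp (fun ω => ⟪h, φ ω - μX⟫) 2 P := hφc.const_inner h
    have key1 : (∫ ω, ⟪h, φ ω - μX⟫ * W ω ∂P) = 0 := by
      have h1 : (∫ ω, ⟪h, φ ω - μX⟫ * W ω ∂P)
          = (∫ ω, ⟪h, φ ω - μX⟫ * ⟪g, Y ω - μY⟫ ∂P)
            - ∫ ω, ⟪h, φ ω - μX⟫ * ⟪B₀ g, φ ω - μX⟫ ∂P := by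
        rw [← integral_sub (memL1_mul hA (hYc.const_inner g))
          (memL1_mul hA (hφc.const_inner (B₀ g)))]
        simp only [hWdef, mul_sub]
      rw [h1, ← hCXY h g, ← hCXX h (B₀ g), ← ContinuousLinearMap.comp_apply, hB₀, sub_self]
    have hsplit : ∀ ω, ⟪h, φ ω⟫ * W ω = ⟪h, φ ω - μX⟫ * W ω + ⟪h, μX⟫ * W ω := by
      intro ω
      rw [inner_sub_right]
      ring
    rw [integral_congr_ae (Filter.Eventually.of_forall hsplit),
      integral_add (memL1_mul hA hW2) (hWi.const_mul _),
      key1, integral_const_mul, hintW, mul_zero, add_zero]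
  -- the L² element associated to W and its inner products
  set Wlp : Lp ℝ 2 P := hW2.toLp W with hWlpdef
  have hWcoe : (Wlp : Ω → ℝ) =ᵐ[P] W := hW2.coeFn_toLp
  set T : Lp ℝ 2 P →L[ℝ] ℝ := innerSL ℝ Wlp with hTdef
  have hTeq : ∀ f : Lp ℝ 2 P, T f = ∫ ω, W ω * (f : Ω → ℝ) ω ∂P := by
    intro f
    have h0 : (⟪Wlp, f⟫ : ℝ) = ∫ ω, ⟪(Wlp : Ω → ℝ) ω, (f : Ω → ℝ) ω⟫ ∂P :=
      L2.inner_def Wlp f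
    rw [hTdef]
    simp only [innerSL_apply_apply]
    rw [h0]
    refine integral_congr_ae (hWcoe.mono fun ω hω => ?_)
    simp [hω, RCLike.inner_apply, mul_comm]
  -- T vanishes on the spanning set
  have hS : ({f : Lp ℝ 2 P | ∃ h : M, (f : Ω → ℝ) =ᵐ[P] fun ω => ⟪h, φ ω⟫} ∪
      {f : Lp ℝ 2 P | (f : Ω → ℝ) =ᵐ[P] fun _ => (1 : ℝ)})
      ⊆ (LinearMap.ker (T : Lp ℝ 2 P →ₗ[ℝ] ℝ) : Set (Lp ℝ 2 P)) := by
    rintro f (⟨h, hf⟩ | hf)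
    · have : T f = ∫ ω, ⟪h, φ ω⟫ * W ω ∂P := by
        rw [hTeq f]
        refine integral_congr_ae (hf.mono fun ω hω => ?_)
        simp only [hω]
        ring
      simpa [LinearMap.mem_ker, this] using key h
    · have hf' : (f : Ω → ℝ) =ᵐ[P] fun _ => (1 : ℝ) := hf
      have : T f = ∫ ω, W ω ∂P := by
        rw [hTeq f]
        refine integral_congr_ae (hf'.mono fun ω hω => ?_)
        simp only [hω]
        ring
      simpa [LinearMap.mem_ker, this] using hintW
  -- hence T vanishes on lpMeas
  have hTmeas : ∀ f : Lp ℝ 2 P, f ∈ (@lpMeas Ω ℝ ℝ _ _ _ m F 2 P : Set (Lp ℝ 2 P)) → T f = 0 := by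
    intro f hf
    rw [← hdense] at hf
    have hsub : closure (↑(Submodule.span ℝ
        ({f : Lp ℝ 2 P | ∃ h : M, (f : Ω → ℝ) =ᵐ[P] fun ω => ⟪h, φ ω⟫} ∪
          {f : Lp ℝ 2 P | (f : Ω → ℝ) =ᵐ[P] fun _ => (1 : ℝ)})) : Set (Lp ℝ 2 P))
        ⊆ (LinearMap.ker (T : Lp ℝ 2 P →ₗ[ℝ] ℝ) : Set (Lp ℝ 2 P)) := by
      refine closure_minimal ?_ (ContinuousLinearMap.isClosed_ker T)
      exact_mod_cast Submodule.span_le.mpr hS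
    exact hsub hf
  -- set integrals of W over m-measurable sets vanish
  have hsetW : ∀ s : Set Ω, MeasurableSet[m] s → (∫ ω in s, W ω ∂P) = 0 := by
    intro s hs
    have hμs : P s ≠ ⊤ := measure_ne_top P s
    set ind : Lp ℝ 2 P := indicatorConstLp 2 (hm s hs) hμs (1 : ℝ) with hind
    have hmem : ind ∈ (@lpMeas Ω ℝ ℝ _ _ _ m F 2 P : Set (Lp ℝ 2 P)) :=
      mem_lpMeas_indicatorConstLp hm hs hμs
    have h0 : T ind = 0 := hTmeas ind hmem
    have h1 : T ind = ∫ ω in s, (Wlp : Ω → ℝ) ω ∂P := by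
      have := L2.inner_indicatorConstLp_one (𝕜 := ℝ) (hm s hs) hμs Wlp
      rw [hTdef]
      simp only [innerSL_apply_apply]
      rw [real_inner_comm, this]
    have h2 : (∫ ω in s, (Wlp : Ω → ℝ) ω ∂P) = ∫ ω in s, W ω ∂P :=
      integral_congr_ae (ae_restrict_of_ae hWcoe)
    rw [← h2, ← h1, h0]
  -- conclude via the characterization of the conditional expectation
  haveI : SigmaFinite (P.trim hm) := by
    have : IsFiniteMeasure (P.trim hm) := isFiniteMeasure_trim hm
    infer_instance
  have hgYi : Integrable (fun ω => ⟪g, Y ω⟫) P := hYi.const_inner g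
  have hZi : Integrable (fun ω => ⟪B₀ g, φ ω - μX⟫ + c) P :=
    ((hφc.const_inner (B₀ g)).integrable one_le_two).add (integrable_const c)
  have hWZ : ∀ ω, W ω = ⟪g, Y ω⟫ - (⟪B₀ g, φ ω - μX⟫ + c) := by
    intro ω
    simp only [hWdef, hc, inner_sub_right]
    ring
  refine (ae_eq_condExp_of_forall_setIntegral_eq hm hgYi
    (fun s _ _ => hZi.integrableOn) (fun s hs _ => ?_) ?_).symm
  · have h3 : (∫ ω in s, W ω ∂P)
        = (∫ ω in s, ⟪g, Y ω⟫ ∂P) - ∫ ω in s, (⟪B₀ g, φ ω - μX⟫ + c) ∂P := by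
      rw [← integral_sub hgYi.integrableOn hZi.integrableOn]
      exact integral_congr_ae (Filter.Eventually.of_forall fun ω => hWZ ω)
    have := hsetW s hs
    rw [h3] at this
    linarith
  · have h1 : StronglyMeasurable[m] (fun ω => φ ω - μX) :=
      hφm.sub (stronglyMeasurable_const : StronglyMeasurable[m] fun _ : Ω => μX)
    have h2 : StronglyMeasurable[m] (fun ω => ⟪B₀ g, φ ω - μX⟫) :=
      ((stronglyMeasurable_const : StronglyMeasurable[m] fun _ : Ω => B₀ g).inner h1)
    have h3 : StronglyMeasurable[m] (fun ω => ⟪B₀ g, φ ω - μX⟫ + c) :=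
      h2.add (stronglyMeasurable_const : StronglyMeasurable[m] fun _ : Ω => c)
    exact h3.aestronglyMeasurable
end

section
/- Let K be a separable real Hilbert space, M a real Hilbert space, m a sub-σ-algebra of 𝓕, Y : Ω → K Bochner integrable, φ : Ω → M an m-measurable Bochner integrable random element with mean μ_X = E[φ], and B₀ : K → M a bounded linear operator with Hilbert adjoint B₀* : M → K. Suppose that for every g ∈ K, E[⟨g, Y⟩ | m] = ⟨B₀ g, φ − μ_X⟩ + E[⟨g, Y⟩] almost surely. Then E[Y | m] = B₀*(φ − μ_X) + E[Y] almost surely, as an identity of K-valued random elements. -/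
/-!
`E[Y | m]` is the unique `m`-measurable integrable `Z` with the same integrals as `Y` over every
`m`-measurable set. A vector in a Hilbert space is determined by its inner products, and
`⟨g, ·⟩` commutes with set integrals, so it suffices that `E[⟨g, Y⟩ | m] = ⟨g, Z⟩` for every `g`.
For `Z = B₀*(φ − μ_X) + E[Y]` this is the hypothesis, rewritten with `⟨B₀ g, v⟩ = ⟨g, B₀* v⟩`.
-/

open MeasureTheory RealInnerProductSpace

theorem condExp_ae_eq_of_forall_condExp_inner_ae_eq
    {α E : Type*} {m m₀ : MeasurableSpace α} {μ : Measure α}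
    [NormedAddCommGroup E] [InnerProductSpace ℝ E] [CompleteSpace E]
    (hm : m ≤ m₀) [SigmaFinite (μ.trim hm)] {Y Z : α → E}
    (hY : Integrable Y μ) (hZ : Integrable Z μ) (hZm : StronglyMeasurable[m] Z)
    (h : ∀ g : E, μ[fun x => ⟪g, Y x⟫|m] =ᵐ[μ] fun x => ⟪g, Z x⟫) :
    μ[Y|m] =ᵐ[μ] Z := by
  refine (ae_eq_condExp_of_forall_setIntegral_eq hm hY (fun s _ _ => hZ.integrableOn)
    (fun s hs _ => ext_inner_left ℝ fun g => ?_) hZm.aestronglyMeasurable).symm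
  calc ⟪g, ∫ x in s, Z x ∂μ⟫
      = ∫ x in s, ⟪g, Z x⟫ ∂μ := (integral_inner hZ.integrableOn g).symm
    _ = ∫ x in s, μ[fun x => ⟪g, Y x⟫|m] x ∂μ :=
        setIntegral_congr_ae (hm s hs) ((h g).mono fun _ hx _ => hx.symm)
    _ = ∫ x in s, ⟪g, Y x⟫ ∂μ := setIntegral_condExp hm (hY.const_inner g) hs
    _ = ⟪g, ∫ x in s, Y x ∂μ⟫ := integral_inner hY.integrableOn g

theorem stmt3_general
    {Ω : Type*} [F : MeasurableSpace Ω] (P : Measure Ω) [IsProbabilityMeasure P]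
    {M K : Type*}
    [NormedAddCommGroup M] [InnerProductSpace ℝ M] [CompleteSpace M]
    [NormedAddCommGroup K] [InnerProductSpace ℝ K] [CompleteSpace K]
    (m : MeasurableSpace Ω) (hm : m ≤ F)
    (Y : Ω → K) (hY : Integrable Y P)
    (φ : Ω → M) (hφm : StronglyMeasurable[m] φ) (hφ : Integrable φ P)
    (μX : M)
    (B₀ : K →L[ℝ] M)
    (h : ∀ g : K,
      P[fun ω => ⟪g, Y ω⟫|m]
        =ᵐ[P] fun ω => ⟪B₀ g, φ ω - μX⟫ + ∫ ω', ⟪g, Y ω'⟫ ∂P) :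
    P[Y|m]
      =ᵐ[P] fun ω =>
        (ContinuousLinearMap.adjoint B₀) (φ ω - μX) + ∫ ω', Y ω' ∂P := by
  set A := ContinuousLinearMap.adjoint B₀
  have hZ : Integrable (fun ω => A (φ ω - μX) + ∫ ω', Y ω' ∂P) P :=
    (A.integrable_comp (hφ.sub (integrable_const μX))).add (integrable_const _)
  have hZm : StronglyMeasurable[m] fun ω => A (φ ω - μX) + ∫ ω', Y ω' ∂P :=
    (A.continuous.comp_stronglyMeasurable (hφm.sub stronglyMeasurable_const)).add
      stronglyMeasurable_const
  refine condExp_ae_eq_of_forall_condExp_inner_ae_eq hm hY hZ hZm fun g =>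
    (h g).trans (Filter.Eventually.of_forall fun ω => ?_)
  simp only [inner_add_right, A, ContinuousLinearMap.adjoint_inner_right, integral_inner hY g]

/-- Proposition 2 of the paper (abstract form): if for every `g ∈ K` the conditional
expectation of `⟨g, Y⟩` given `m` equals `⟨B₀ g, φ − μ_X⟩ + E[⟨g, Y⟩]` a.s., then
`E[Y | m] = B₀*(φ − μ_X) + E[Y]` a.s. as `K`-valued random elements. -/
theorem stmt3
    {Ω : Type*} [F : MeasurableSpace Ω] (P : Measure Ω) [IsProbabilityMeasure P]
    {M K : Type*}
    [NormedAddCommGroup M] [InnerProductSpace ℝ M] [CompleteSpace M]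
    [NormedAddCommGroup K] [InnerProductSpace ℝ K] [CompleteSpace K]
    [TopologicalSpace.SeparableSpace K]
    (m : MeasurableSpace Ω) (hm : m ≤ F)
    (Y : Ω → K) (hY : Integrable Y P)
    (φ : Ω → M) (hφm : StronglyMeasurable[m] φ) (hφ : Integrable φ P)
    (μX : M) (hμX : μX = ∫ ω, φ ω ∂P)
    (B₀ : K →L[ℝ] M)
    (h : ∀ g : K,
      P[fun ω => ⟪g, Y ω⟫|m]
        =ᵐ[P] fun ω => ⟪B₀ g, φ ω - μX⟫ + ∫ ω', ⟪g, Y ω'⟫ ∂P) :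
    P[Y|m]
      =ᵐ[P] fun ω =>
        (ContinuousLinearMap.adjoint B₀) (φ ω - μX) + ∫ ω', Y ω' ∂P :=
  stmt3_general (F := F) P m hm Y hY φ hφm hφ μX B₀ h
end

section
/- Let α > 1 and let (λ_j)_{j≥1} be positive real numbers with c·j^{−α} ≤ λ_j ≤ C·j^{−α} for all j ≥ 1 and some constants 0 < c ≤ C. Then there exists a constant K > 0 such that for every ε ∈ (0, 1], Σ_{j=1}^{∞} λ_j (λ_j + ε)^{−2} ≤ K · ε^{−(α+1)/α}. -/
/-!
Split the series at `N = ⌈ε^(-1/α)⌉`. Each of the first `N` terms is at most `1/(4ε)` by AM-GM,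
so they contribute `O(ε^(-1/α) / ε)`. For the remaining terms use `λ/(λ + ε)² ≤ λ/ε² ≤ C j^(-α)/ε²`;
by the integral test their sum is at most `C N^(1-α) / ((α - 1) ε²)`, which is again
`O(ε^(-(α+1)/α))` by the choice of `N`.
-/

open Set Finset

lemma tsum_rpow_neg_nat_add_le {α : ℝ} (hα : 1 < α) {N : ℕ} (hN : 0 < N) :
    ∑' n : ℕ, ((n : ℝ) + N + 1) ^ (-α) ≤ (N : ℝ) ^ (1 - α) / (α - 1) := by
  have hN' : (0 : ℝ) < N := by exact_mod_cast hN
  have anti : AntitoneOn (fun x : ℝ => x ^ (-α)) (Ici (N : ℝ)) :=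
    (Real.antitoneOn_rpow_Ioi_of_exponent_nonpos (by linarith)).mono
      fun x hx => hN'.trans_le hx
  have key := anti.tsum_comp_add_le_integral N
    (integrableOn_Ioi_rpow_of_lt (by linarith) hN')
    fun t ht => Real.rpow_nonneg (hN'.trans ht).le _
  rw [integral_Ioi_rpow_of_lt (by linarith) hN'] at key
  convert key using 1
  · push_cast; rfl
  · rw [show -α + 1 = 1 - α by ring, neg_div, ← div_neg, neg_sub]

lemma div_add_sq_le_inv_four_mul {x ε : ℝ} (hx : 0 ≤ x) (hε : 0 < ε) :
    x / (x + ε) ^ 2 ≤ 1 / (4 * ε) := by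
  rw [div_le_div_iff₀ (by positivity) (by positivity)]
  nlinarith [sq_nonneg (x - ε)]

lemma div_add_sq_le_div_sq {x ε : ℝ} (hx : 0 ≤ x) (hε : 0 < ε) :
    x / (x + ε) ^ 2 ≤ x / ε ^ 2 := by
  gcongr
  linarith

lemma summable_and_tsum_le_of_le_const_of_le_rpow {f : ℕ → ℝ} {α A B : ℝ} (hα : 1 < α)
    (hf₀ : ∀ j, 0 ≤ f j) (hfA : ∀ j, f j ≤ A) (hfB : ∀ j, f j ≤ B * ((j : ℝ) + 1) ^ (-α))
    {N : ℕ} (hN : 0 < N) :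
    Summable f ∧ ∑' j, f j ≤ N * A + B * ((N : ℝ) ^ (1 - α) / (α - 1)) := by
  have hB : 0 ≤ B := by simpa using (hf₀ 0).trans (hfB 0)
  have hp : Summable fun j : ℕ => ((j : ℝ) + 1) ^ (-α) := by
    simpa using (summable_nat_add_iff 1).2 (Real.summable_nat_rpow.2 (by linarith : -α < -1))
  have hf : Summable f := .of_nonneg_of_le hf₀ hfB (hp.mul_left B)
  refine ⟨hf, ?_⟩
  have head : ∑ j ∈ range N, f j ≤ N * A := by
    simpa using Finset.sum_le_sum fun j (_ : j ∈ range N) => hfA j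
  have tail : ∑' n, f (n + N) ≤ B * ((N : ℝ) ^ (1 - α) / (α - 1)) := calc
    ∑' n, f (n + N) ≤ ∑' n : ℕ, B * ((n : ℝ) + N + 1) ^ (-α) := by
      refine ((summable_nat_add_iff N).2 hf).tsum_le_tsum (fun n => ?_) ?_
      · simpa using hfB (n + N)
      · simpa [add_assoc] using ((summable_nat_add_iff N).2 hp).mul_left B
    _ ≤ _ := by
      rw [tsum_mul_left]
      exact mul_le_mul_of_nonneg_left (tsum_rpow_neg_nat_add_le hα hN) hB
  rw [← hf.sum_add_tsum_nat_add N]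
  exact add_le_add head tail

lemma exists_nat_pos_div_le_and_rpow_div_sq_le {α ε : ℝ} (hα : 1 ≤ α) (hε : 0 < ε)
    (hε₁ : ε ≤ 1) :
    ∃ N : ℕ, 0 < N ∧ (N : ℝ) / ε ≤ 2 * ε ^ (-(α + 1) / α) ∧
      (N : ℝ) ^ (1 - α) / ε ^ 2 ≤ ε ^ (-(α + 1) / α) := by
  set x := ε ^ (-1 / α) with hx
  have hα₀ : 0 < α := by linarith
  have hx₁ : 1 ≤ x :=
    Real.one_le_rpow_of_pos_of_le_one_of_nonpos hε hε₁
      (div_nonpos_of_nonpos_of_nonneg (by norm_num) hα₀.le)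
  have hxN : x ≤ ⌈x⌉₊ := Nat.le_ceil x
  have hε_first : ε ^ (-(α + 1) / α) = x / ε := by
    rw [hx, div_eq_mul_inv _ ε, ← Real.rpow_neg_one ε, ← Real.rpow_add hε]
    congr 1
    field_simp
    ring
  have hε_second : ε ^ (-(α + 1) / α) = x ^ (1 - α) / ε ^ 2 := by
    rw [hx, ← Real.rpow_mul hε.le, ← Real.rpow_natCast, ← Real.rpow_sub hε]
    congr 1
    field_simp
    push_cast
    ring
  refine ⟨⌈x⌉₊, Nat.ceil_pos.2 (by linarith), ?_, ?_⟩
  · rw [hε_first, mul_div_assoc']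
    gcongr
    exact Nat.ceil_le_two_mul (by linarith)
  · rw [hε_second]
    exact div_le_div_of_nonneg_right
      (Real.rpow_le_rpow_of_nonpos (by linarith) hxN (by linarith)) (by positivity)

theorem stmt8_general
    (α : ℝ) (hα : 1 < α)
    (lam : ℕ → ℝ) (C : ℝ)
    (hpos : ∀ j, 0 < lam j)
    (hhigh : ∀ j : ℕ, lam j ≤ C * ((j : ℝ) + 1) ^ (-α)) :
    ∃ K > 0, ∀ ε : ℝ, 0 < ε → ε ≤ 1 →
      Summable (fun j => lam j / (lam j + ε) ^ 2) ∧
      ∑' j : ℕ, lam j / (lam j + ε) ^ 2 ≤ K * ε ^ (-(α + 1) / α) := by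
  have hC : 0 < C := (hpos 0).trans_le (by simpa using hhigh 0)
  have hα₁ : 0 < α - 1 := by linarith
  refine ⟨1 / 2 + C / (α - 1), by positivity, fun ε hε hε₁ => ?_⟩
  obtain ⟨N, hN, hhead, htail⟩ := exists_nat_pos_div_le_and_rpow_div_sq_le hα.le hε hε₁
  have hterm (j : ℕ) : lam j / (lam j + ε) ^ 2 ≤ C / ε ^ 2 * ((j : ℝ) + 1) ^ (-α) := calc
    _ ≤ lam j / ε ^ 2 := div_add_sq_le_div_sq (hpos j).le hε
    _ ≤ C * ((j : ℝ) + 1) ^ (-α) / ε ^ 2 := by gcongr; exact hhigh j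
    _ = _ := by ring
  obtain ⟨hsum, hle⟩ := summable_and_tsum_le_of_le_const_of_le_rpow hα
    (fun j => div_nonneg (hpos j).le (sq_nonneg _))
    (fun j => div_add_sq_le_inv_four_mul (hpos j).le hε) hterm hN
  refine ⟨hsum, hle.trans ?_⟩
  set E := ε ^ (-(α + 1) / α)
  calc N * (1 / (4 * ε)) + C / ε ^ 2 * ((N : ℝ) ^ (1 - α) / (α - 1))
      = N / ε / 4 + C / (α - 1) * ((N : ℝ) ^ (1 - α) / ε ^ 2) := by ring
    _ ≤ 2 * E / 4 + C / (α - 1) * E := by gcongr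
    _ = (1 / 2 + C / (α - 1)) * E := by ring

/-- Lemma 4 of the paper: if `λ_j ≍ j^{−α}` with `α > 1`, then
`Σ_j λ_j (λ_j + ε)^{−2} = O(ε^{−(α+1)/α})` uniformly for `ε ∈ (0, 1]`.
(Indices are shifted so that `lam j` plays the role of `λ_{j+1}`.) -/
theorem stmt8
    (α : ℝ) (hα : 1 < α)
    (lam : ℕ → ℝ) (c C : ℝ) (hc : 0 < c) (hcC : c ≤ C)
    (hpos : ∀ j, 0 < lam j)
    (hlow : ∀ j : ℕ, c * ((j : ℝ) + 1) ^ (-α) ≤ lam j)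
    (hhigh : ∀ j : ℕ, lam j ≤ C * ((j : ℝ) + 1) ^ (-α)) :
    ∃ K > 0, ∀ ε : ℝ, 0 < ε → ε ≤ 1 →
      Summable (fun j => lam j / (lam j + ε) ^ 2) ∧
      ∑' j : ℕ, lam j / (lam j + ε) ^ 2 ≤ K * ε ^ (-(α + 1) / α) :=
  stmt8_general α hα lam C hpos hhigh
end

section
/- Let H and K be Hilbert spaces, let A and T be positive bounded self-adjoint operators on H, and let ε > 0. Then (A + εI)⁻¹A − (T + εI)⁻¹T = ε (A + εI)⁻¹ (A − T) (T + εI)⁻¹. Consequently, for every bounded linear operator S : K → H and every 0 < β ≤ 1 (with T^β defined by the continuous functional calculus), ‖[(A + εI)⁻¹A − (T + εI)⁻¹T] T^{β} S‖ ≤ ε^{β−1} ‖A − T‖ ‖S‖. -/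
/-!
Write `U = (a + ε)⁻¹` and `V = (b + ε)⁻¹`. Since `U a = 1 - ε U` and `V b = 1 - ε V`, the
difference `U a - V b` is `ε (V - U)`, and the resolvent identity turns `V - U` into
`U (a - b) V`. For the bound, `‖U‖ ≤ ε⁻¹`, and `V b^β` is the functional calculus of
`x ↦ x^β / (x + ε)`, which is at most `ε^(β - 1)` on `[0, ∞)` because `x^β ≤ (x + ε)^β`.
-/

section Resolvent

variable {𝕜 R : Type*} [CommSemiring 𝕜] [Ring R] [Module 𝕜 R] [SMulCommClass 𝕜 R R]

lemma ringInverse_add_smul_one_mul {a : R} {c : 𝕜} (ha : IsUnit (a + c • 1)) :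
    Ring.inverse (a + c • 1) * a = 1 - c • Ring.inverse (a + c • 1) := by
  have hsmul : Ring.inverse (a + c • 1) * c • 1 = c • Ring.inverse (a + c • 1) := by
    rw [mul_smul_comm, mul_one]
  rw [eq_sub_iff_add_eq, ← hsmul, ← mul_add, Ring.inverse_mul_cancel _ ha]

lemma ringInverse_add_smul_one_mul_sub {a b : R} {c : 𝕜} (ha : IsUnit (a + c • 1))
    (hb : IsUnit (b + c • 1)) :
    Ring.inverse (a + c • 1) * a - Ring.inverse (b + c • 1) * b
      = c • (Ring.inverse (a + c • 1) * (a - b) * Ring.inverse (b + c • 1)) := by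
  rw [ringInverse_add_smul_one_mul ha, ringInverse_add_smul_one_mul hb, sub_sub_sub_cancel_left,
    ← smul_sub, ← neg_sub, Ring.inverse_sub_inverse ⟨fun _ => hb, fun _ => ha⟩,
    add_sub_add_right_eq_sub, ← neg_sub a b, mul_neg, neg_mul, neg_neg]

end Resolvent

lemma Real.inv_add_mul_rpow_le {x ε β : ℝ} (hx : 0 ≤ x) (hε : 0 < ε) (hβ₀ : 0 ≤ β)
    (hβ₁ : β ≤ 1) : (x + ε)⁻¹ * x ^ β ≤ ε ^ (β - 1) := by
  have hxε : 0 < x + ε := by linarith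
  calc (x + ε)⁻¹ * x ^ β ≤ (x + ε)⁻¹ * (x + ε) ^ β := by
        gcongr
        linarith
    _ = (x + ε) ^ (β - 1) := by rw [Real.rpow_sub_one hxε.ne', inv_mul_eq_div]
    _ ≤ ε ^ (β - 1) := Real.rpow_le_rpow_of_nonpos hε (by linarith) (by linarith)

section CStarAlgebra

variable {A : Type*} [CStarAlgebra A] [PartialOrder A] [StarOrderedRing A] {a b : A} {ε : ℝ}

lemma isUnit_add_smul_one (ha : 0 ≤ a) (hε : 0 < ε) : IsUnit (a + ε • 1) :=
  (IsStrictlyPositive.nonneg_add ha (isStrictlyPositive_one.smul hε)).isUnit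

lemma add_pos_of_mem_spectrum (ha : 0 ≤ a) (hε : 0 < ε) {x : ℝ} (hx : x ∈ spectrum ℝ a) :
    0 < x + ε :=
  add_pos_of_nonneg_of_pos (spectrum_nonneg_of_nonneg ha hx) hε

lemma continuousOn_inv_add_spectrum (ha : 0 ≤ a) (hε : 0 < ε) :
    ContinuousOn (fun x : ℝ => (x + ε)⁻¹) (spectrum ℝ a) :=
  ContinuousOn.inv₀ (by fun_prop) fun _ hx => (add_pos_of_mem_spectrum ha hε hx).ne'

lemma ringInverse_add_smul_one_eq_cfc (ha : 0 ≤ a) (hε : 0 < ε) :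
    Ring.inverse (a + ε • 1) = cfc (fun x : ℝ => (x + ε)⁻¹) a := by
  rw [cfc_inv (fun x : ℝ => x + ε) a fun _ hx => (add_pos_of_mem_spectrum ha hε hx).ne',
    cfc_add .., cfc_id' .., cfc_const .., Algebra.algebraMap_eq_smul_one]

lemma norm_ringInverse_add_smul_one_mul_rpow_le (ha : 0 ≤ a) (hε : 0 < ε) {β : ℝ}
    (hβ₀ : 0 ≤ β) (hβ₁ : β ≤ 1) :
    ‖Ring.inverse (a + ε • 1) * cfc (fun x : ℝ => x ^ β) a‖ ≤ ε ^ (β - 1) := by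
  rw [ringInverse_add_smul_one_eq_cfc ha hε, ← cfc_mul _ _ a (continuousOn_inv_add_spectrum ha hε)]
  refine norm_cfc_le (by positivity) fun x hx => ?_
  have hx₀ := spectrum_nonneg_of_nonneg ha hx
  rw [Real.norm_of_nonneg (by positivity)]
  exact Real.inv_add_mul_rpow_le hx₀ hε hβ₀ hβ₁

lemma norm_ringInverse_add_smul_one_le (ha : 0 ≤ a) (hε : 0 < ε) :
    ‖Ring.inverse (a + ε • 1)‖ ≤ ε⁻¹ := by
  simpa [cfc_const_one ℝ a, Real.rpow_neg_one] using
    norm_ringInverse_add_smul_one_mul_rpow_le ha hε le_rfl zero_le_one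

lemma norm_ringInverse_add_smul_one_mul_sub_mul_rpow_le (ha : 0 ≤ a) (hb : 0 ≤ b) (hε : 0 < ε)
    {β : ℝ} (hβ₀ : 0 ≤ β) (hβ₁ : β ≤ 1) :
    ‖(Ring.inverse (a + ε • 1) * a - Ring.inverse (b + ε • 1) * b) * cfc (fun x : ℝ => x ^ β) b‖
      ≤ ε ^ (β - 1) * ‖a - b‖ := by
  rw [ringInverse_add_smul_one_mul_sub (isUnit_add_smul_one ha hε) (isUnit_add_smul_one hb hε),
    smul_mul_assoc, mul_assoc, norm_smul, Real.norm_of_nonneg hε.le]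
  calc ε * ‖Ring.inverse (a + ε • 1) * (a - b) * (Ring.inverse (b + ε • 1) * cfc (· ^ β) b)‖
      ≤ ε * (ε⁻¹ * ‖a - b‖ * ε ^ (β - 1)) := by
        gcongr
        refine (norm_mul₃_le ..).trans ?_
        gcongr
        · exact norm_ringInverse_add_smul_one_le ha hε
        · exact norm_ringInverse_add_smul_one_mul_rpow_le hb hε hβ₀ hβ₁
    _ = ε ^ (β - 1) * ‖a - b‖ := by field_simp

end CStarAlgebra

theorem stmt11_general
    {H K : Type*}
    [NormedAddCommGroup H] [InnerProductSpace ℂ H] [CompleteSpace H]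
    [NormedAddCommGroup K] [InnerProductSpace ℂ K]
    (A T : H →L[ℂ] H) (hA : A.IsPositive) (hT : T.IsPositive)
    (ε : ℝ) (hε : 0 < ε) :
    IsUnit (A + ε • 1) ∧ IsUnit (T + ε • 1) ∧
    Ring.inverse (A + ε • 1) * A - Ring.inverse (T + ε • 1) * T
      = ε • (Ring.inverse (A + ε • 1) * (A - T) * Ring.inverse (T + ε • 1)) ∧
    (∀ (S : K →L[ℂ] H) (β : ℝ), 0 < β → β ≤ 1 →
      ‖(Ring.inverse (A + ε • 1) * A - Ring.inverse (T + ε • 1) * T).comp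
          ((cfc (fun x : ℝ => x ^ β) T).comp S)‖
        ≤ ε ^ (β - 1) * ‖A - T‖ * ‖S‖) := by
  have hA₀ : 0 ≤ A := (A.nonneg_iff_isPositive).mpr hA
  have hT₀ : 0 ≤ T := (T.nonneg_iff_isPositive).mpr hT
  have hAε := isUnit_add_smul_one hA₀ hε
  have hTε := isUnit_add_smul_one hT₀ hε
  refine ⟨hAε, hTε, ringInverse_add_smul_one_mul_sub hAε hTε, fun S β hβ₀ hβ₁ => ?_⟩
  rw [← ContinuousLinearMap.comp_assoc]
  exact (ContinuousLinearMap.opNorm_comp_le _ _).trans <| by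
    gcongr
    exact norm_ringInverse_add_smul_one_mul_sub_mul_rpow_le hA₀ hT₀ hε hβ₀.le hβ₁

/-- The commutation identity
`(A + εI)⁻¹A − (T + εI)⁻¹T = ε (A + εI)⁻¹ (A − T) (T + εI)⁻¹` for positive
operators `A`, `T`, together with the resulting bound
`‖[(A + εI)⁻¹A − (T + εI)⁻¹T] T^β S‖ ≤ ε^{β−1} ‖A − T‖ ‖S‖` for `0 < β ≤ 1`,
where `T^β` is defined by the continuous functional calculus. -/
theorem stmt11
    {H K : Type*}
    [NormedAddCommGroup H] [InnerProductSpace ℂ H] [CompleteSpace H]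
    [NormedAddCommGroup K] [InnerProductSpace ℂ K] [CompleteSpace K]
    (A T : H →L[ℂ] H) (hA : A.IsPositive) (hT : T.IsPositive)
    (ε : ℝ) (hε : 0 < ε) :
    IsUnit (A + ε • 1) ∧ IsUnit (T + ε • 1) ∧
    Ring.inverse (A + ε • 1) * A - Ring.inverse (T + ε • 1) * T
      = ε • (Ring.inverse (A + ε • 1) * (A - T) * Ring.inverse (T + ε • 1)) ∧
    (∀ (S : K →L[ℂ] H) (β : ℝ), 0 < β → β ≤ 1 →
      ‖(Ring.inverse (A + ε • 1) * A - Ring.inverse (T + ε • 1) * T).comp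
          ((cfc (fun x : ℝ => x ^ β) T).comp S)‖
        ≤ ε ^ (β - 1) * ‖A - T‖ * ‖S‖) :=
  stmt11_general A T hA hT ε hε
end

section
/- Let α > 1 and β > 0 with β > (α − 1)/(2α), and set b = min(β, 1). Define, for δ > 0, ℓ₁(δ) = −1/2 + δ(1 − b), ℓ₂(δ) = −δ b, ℓ₃(δ) = −1 + δ(3α + 1)/(2α), ℓ₄(δ) = −1/2 + δ(α + 1)/(2α), and m(δ) = max{ℓ₁(δ), ℓ₂(δ), ℓ₃(δ), ℓ₄(δ)}. Then for every δ > 0, m(δ) ≥ −αb/(2αb + α + 1), with equality if and only if δ = α/(2αb + α + 1). -/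
/-!
Of the four exponent lines, `ℓ₂` is strictly decreasing and `ℓ₄` strictly increasing, and they
cross at `δ* = α/(2αb + α + 1)` with common value `v = −αb/(2αb + α + 1)`; so `max ℓ₂ ℓ₄ ≥ v`,
with equality only at `δ*`. The condition `β > (α − 1)/(2α)` amounts to `α − 1 < 2αb`, which is
exactly what makes `ℓ₁` and `ℓ₃` lie below `v` at `δ*`, so the maximum of all four is `v` there.
-/

section CrossingLines

variable {ι κ : Type*} [LinearOrder ι] [LinearOrder κ] {f g : ι → κ} {x₀ : ι} {v : κ}

theorem le_max_of_strictAnti_of_strictMono (hf : StrictAnti f) (hg : StrictMono g)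
    (hfx₀ : f x₀ = v) (hgx₀ : g x₀ = v) (x : ι) : v ≤ max (f x) (g x) := by
  rcases le_total x x₀ with hx | hx
  · exact hfx₀ ▸ (hf.antitone hx).trans (le_max_left _ _)
  · exact hgx₀ ▸ (hg.monotone hx).trans (le_max_right _ _)

theorem max_le_iff_eq_of_strictAnti_of_strictMono (hf : StrictAnti f) (hg : StrictMono g)
    (hfx₀ : f x₀ = v) (hgx₀ : g x₀ = v) {x : ι} : max (f x) (g x) ≤ v ↔ x = x₀ := by
  refine ⟨fun hle => le_antisymm ?_ ?_, fun hx => by simp [hx, hfx₀, hgx₀]⟩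
  · exact hg.le_iff_le.mp (hgx₀ ▸ (le_max_right _ _).trans hle)
  · exact hf.le_iff_ge.mp (hfx₀ ▸ (le_max_left _ _).trans hle)

theorem le_max_max_and_max_max_eq_iff {f₁ f₃ : ι → κ} (hf : StrictAnti f) (hg : StrictMono g)
    (hfx₀ : f x₀ = v) (hgx₀ : g x₀ = v) (hf₁ : f₁ x₀ ≤ v) (hf₃ : f₃ x₀ ≤ v) (x : ι) :
    v ≤ max (max (f₁ x) (f x)) (max (f₃ x) (g x)) ∧
      (max (max (f₁ x) (f x)) (max (f₃ x) (g x)) = v ↔ x = x₀) := by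
  have hv : v ≤ max (f x) (g x) := le_max_of_strictAnti_of_strictMono hf hg hfx₀ hgx₀ x
  have hmax : max (f x) (g x) ≤ max (max (f₁ x) (f x)) (max (f₃ x) (g x)) :=
    max_le_max (le_max_right _ _) (le_max_right _ _)
  refine ⟨hv.trans hmax, fun heq => ?_, fun hx => ?_⟩
  · exact (max_le_iff_eq_of_strictAnti_of_strictMono hf hg hfx₀ hgx₀).mp (heq ▸ hmax)
  · subst hx
    rw [hfx₀, hgx₀]
    exact le_antisymm (max_le (max_le hf₁ le_rfl) (max_le hf₃ le_rfl))
      ((le_max_right _ _).trans (le_max_left _ _))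

end CrossingLines

theorem sub_one_lt_two_mul_mul_min {α β : ℝ} (hα : 0 < α) (h : (α - 1) / (2 * α) < β) :
    α - 1 < 2 * α * min β 1 := by
  have h₁ : (α - 1) / (2 * α) < 1 := by rw [div_lt_one (by positivity)]; linarith
  have := (div_lt_iff₀ (by positivity : (0 : ℝ) < 2 * α)).mp (lt_min h h₁)
  linarith

section ExponentLines

variable {α b D : ℝ} (hα : 0 < α) (hab : α - 1 < 2 * α * b) (hD : D = 2 * α * b + α + 1)
include hα hab hD

theorem exponent_lines_crossing :
    -(α / D * b) = -(α * b) / D ∧ -1 / 2 + α / D * (α + 1) / (2 * α) = -(α * b) / D := by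
  have hD₀ : 0 < D := by nlinarith
  constructor
  · field_simp
  · field_simp
    rw [hD]; ring

theorem exponent_lines_below_crossing :
    -1 / 2 + α / D * (1 - b) ≤ -(α * b) / D ∧ -1 + α / D * (3 * α + 1) / (2 * α) ≤ -(α * b) / D := by
  have hD₀ : 0 < D := by nlinarith
  have hgap : 0 ≤ (2 * α * b - (α - 1)) / (2 * D) := div_nonneg (by linarith) (by positivity)
  constructor
  · have : -(α * b) / D - (-1 / 2 + α / D * (1 - b)) = (2 * α * b - (α - 1)) / (2 * D) := by
      field_simp; rw [hD]; ring
    linarith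
  · have : -(α * b) / D - (-1 + α / D * (3 * α + 1) / (2 * α)) = (2 * α * b - (α - 1)) / (2 * D) := by
      field_simp; rw [hD]; ring
    linarith

end ExponentLines

theorem stmt12_general
    (α β : ℝ) (hα : 1 < α) (h : (α - 1) / (2 * α) < β)
    (b : ℝ) (hb : b = min β 1) :
    ∀ δ : ℝ, 0 < δ →
      (-(α * b) / (2 * α * b + α + 1)
          ≤ max (max (-1 / 2 + δ * (1 - b)) (-(δ * b)))
              (max (-1 + δ * (3 * α + 1) / (2 * α)) (-1 / 2 + δ * (α + 1) / (2 * α)))) ∧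
      (max (max (-1 / 2 + δ * (1 - b)) (-(δ * b)))
              (max (-1 + δ * (3 * α + 1) / (2 * α)) (-1 / 2 + δ * (α + 1) / (2 * α)))
          = -(α * b) / (2 * α * b + α + 1)
        ↔ δ = α / (2 * α * b + α + 1)) := by
  intro δ _
  have hα₀ : 0 < α := by linarith
  have hab : α - 1 < 2 * α * b := hb ▸ sub_one_lt_two_mul_mul_min hα₀ h
  have hb₀ : 0 < b := by nlinarith
  have hℓ₂ : StrictAnti fun δ : ℝ => -(δ * b) := fun x y hxy => by simp only; nlinarith
  have hℓ₄ : StrictMono fun δ : ℝ => -1 / 2 + δ * (α + 1) / (2 * α) := fun x y hxy => by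
    simp only; gcongr
  obtain ⟨hℓ₂δ, hℓ₄δ⟩ := exponent_lines_crossing hα₀ hab rfl
  obtain ⟨hℓ₁δ, hℓ₃δ⟩ := exponent_lines_below_crossing hα₀ hab rfl
  exact le_max_max_and_max_max_eq_iff (f₁ := fun δ => -1 / 2 + δ * (1 - b))
    (f₃ := fun δ => -1 + δ * (3 * α + 1) / (2 * α)) hℓ₂ hℓ₄ hℓ₂δ hℓ₄δ hℓ₁δ hℓ₃δ δ

/-- Case 1 of Theorem 3 of the paper: for `α > 1`, `β > (α−1)/(2α)` and
`b = β ∧ 1`, the maximum `m(δ)` of the four exponent lines is minimized exactly at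
`δ = α/(2αb + α + 1)`, with minimal value `−αb/(2αb + α + 1)`. -/
theorem stmt12
    (α β : ℝ) (hα : 1 < α) (hβ : 0 < β) (h : (α - 1) / (2 * α) < β)
    (b : ℝ) (hb : b = min β 1) :
    ∀ δ : ℝ, 0 < δ →
      (-(α * b) / (2 * α * b + α + 1)
          ≤ max (max (-1 / 2 + δ * (1 - b)) (-(δ * b)))
              (max (-1 + δ * (3 * α + 1) / (2 * α)) (-1 / 2 + δ * (α + 1) / (2 * α)))) ∧
      (max (max (-1 / 2 + δ * (1 - b)) (-(δ * b)))
              (max (-1 + δ * (3 * α + 1) / (2 * α)) (-1 / 2 + δ * (α + 1) / (2 * α)))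
          = -(α * b) / (2 * α * b + α + 1)
        ↔ δ = α / (2 * α * b + α + 1)) :=
  stmt12_general α β hα h b hb
end

section
/- Let α > 1 and 0 < β ≤ (α − 1)/(2α). Define, for δ > 0, ℓ₁(δ) = −1/2 + δ(1 − β), ℓ₂(δ) = −δβ, ℓ₃(δ) = −1 + δ(3α + 1)/(2α), ℓ₄(δ) = −1/2 + δ(α + 1)/(2α), and m(δ) = max{ℓ₁(δ), ℓ₂(δ), ℓ₃(δ), ℓ₄(δ)}. Then for every δ > 0, m(δ) ≥ −β/2, with equality if and only if δ = 1/2. -/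
/-- Case 2 of Theorem 3 of the paper: for `α > 1` and `0 < β ≤ (α−1)/(2α)`, the
maximum `m(δ)` of the four exponent lines is minimized exactly at `δ = 1/2`, with
minimal value `−β/2`. -/
theorem stmt13
    (α β : ℝ) (hα : 1 < α) (hβ : 0 < β) (h : β ≤ (α - 1) / (2 * α)) :
    ∀ δ : ℝ, 0 < δ →
      (-β / 2
          ≤ max (max (-1 / 2 + δ * (1 - β)) (-(δ * β)))
              (max (-1 + δ * (3 * α + 1) / (2 * α)) (-1 / 2 + δ * (α + 1) / (2 * α)))) ∧
      (max (max (-1 / 2 + δ * (1 - β)) (-(δ * β)))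
              (max (-1 + δ * (3 * α + 1) / (2 * α)) (-1 / 2 + δ * (α + 1) / (2 * α)))
          = -β / 2
        ↔ δ = 1 / 2) := by
  have hα0 : (0:ℝ) < 2 * α := by linarith
  have key : β * (2 * α) ≤ α - 1 := (le_div_iff₀ hα0).mp h
  have hβ1 : β < 1 := by nlinarith
  intro δ hδ
  constructor
  · rcases le_total δ (1/2) with hd | hd
    · exact le_max_of_le_left (le_max_of_le_right (by nlinarith))
    · exact le_max_of_le_left (le_max_of_le_left (by nlinarith))
  · constructor
    · intro h1
      have h2 : -1 / 2 + δ * (1 - β) ≤ -β / 2 :=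
        h1 ▸ le_max_of_le_left (le_max_left _ _)
      have h3 : -(δ * β) ≤ -β / 2 :=
        h1 ▸ le_max_of_le_left (le_max_right _ _)
      have hle : δ ≤ 1/2 := by nlinarith
      have hge : 1/2 ≤ δ := by nlinarith
      linarith
    · rintro rfl
      apply le_antisymm
      · apply max_le
        · apply max_le <;> nlinarith
        · have e3 : -1 + (1/2 : ℝ) * (3 * α + 1) / (2 * α) = (1 - α) / (4 * α) := by
            field_simp; ring
          have e4 : -1 / 2 + (1/2 : ℝ) * (α + 1) / (2 * α) = (1 - α) / (4 * α) := by
            field_simp; ring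
          rw [e3, e4, max_self]
          rw [div_le_iff₀ (by linarith : (0:ℝ) < 4 * α)]
          nlinarith
      · exact le_max_of_le_left (le_max_of_le_right (by nlinarith))
end
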